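/- arXiv:1704.07745 — 9 statements merged into one kernel-verified Lean document; each statement's English description precedes it below -/
import Mathlib

section
/- Let a ∈ ℂ with a ≠ 0, let d, e ∈ ℝ² be unit vectors, and let D, E, η, ξ ∈ ℝ. Define u : ℝ² → ℂ by u(x) = a·exp(i·(D·⟪d,x⟫ + i·E·⟪e,x⟫)). Then u satisfies the Helmholtz equation Δu + (η + iξ)²·u = 0 at every point of ℝ² if and only if D² − E² = η² − ξ² and D·E·⟪d,e⟫ = η·ξ. -/
noncomputable section

open Complex

/-- The Euclidean plane ℝ². -/
abbrev V : Type := EuclideanSpace ℝ (Fin 2)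

/-- A (possibly inhomogeneous) plane wave with amplitude `a`, propagation direction `d`,
decay direction `e`, and propagation/decay constants `D`, `E`:
`u(x) = a·exp(i·(D·⟪d,x⟫ + i·E·⟪e,x⟫))`. -/
noncomputable def planeWave (a : ℂ) (d e : V) (D E : ℝ) (x : V) : ℂ :=
  a * Complex.exp (Complex.I *
    ((D : ℂ) * ((inner ℝ d x : ℝ) : ℂ) + Complex.I * ((E : ℂ) * ((inner ℝ e x : ℝ) : ℂ))))

/-- The Laplacian on ℝ² of a complex-valued function. -/
noncomputable def laplacian (u : V → ℂ) (x : V) : ℂ :=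
  ∑ i : Fin 2, iteratedFDeriv ℝ 2 u x ![EuclideanSpace.single i (1 : ℝ),
    EuclideanSpace.single i (1 : ℝ)]

/-! The plane wave is `a · exp ℓ` for the real-linear map `ℓ x = i D ⟪d,x⟫ - E ⟪e,x⟫`, so its
second derivative in directions `v, w` is `ℓ v · ℓ w · u`. Summing over the standard basis `bᵢ`,
for unit `d, e` the Laplacian is `Δu = (∑ᵢ ℓ(bᵢ)²) u = (E² - D² - 2i D E ⟪d,e⟫) u`. As `u` never
vanishes, the Helmholtz equation is the dispersion relation
`E² - D² - 2i D E ⟪d,e⟫ + (η + iξ)² = 0`, whose real and imaginary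
parts are the two stated identities. -/

section ExpLinear

variable {F : Type*} [NormedAddCommGroup F] [NormedSpace ℝ F] (a : ℂ) (ℓ : F →L[ℝ] ℂ)

theorem hasFDerivAt_const_mul_cexp_clm (x : F) :
    HasFDerivAt (fun y => a * exp (ℓ y)) ((a * exp (ℓ x)) • ℓ) x := by
  simpa [smul_smul] using (ℓ.hasFDerivAt.cexp).const_mul a

theorem fderiv_const_mul_cexp_clm :
    fderiv ℝ (fun y => a * exp (ℓ y)) = fun x => (a * exp (ℓ x)) • ℓ :=
  funext fun x => (hasFDerivAt_const_mul_cexp_clm a ℓ x).fderiv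

theorem iteratedFDeriv_two_const_mul_cexp_clm (x v w : F) :
    iteratedFDeriv ℝ 2 (fun y => a * exp (ℓ y)) x ![v, w] = a * exp (ℓ x) * (ℓ v * ℓ w) := by
  have hsecond : HasFDerivAt (fun y => (a * exp (ℓ y)) • ℓ)
      (((a * exp (ℓ x)) • ℓ).smulRight ℓ) x :=
    (hasFDerivAt_const_mul_cexp_clm a ℓ x).smul_const ℓ
  rw [iteratedFDeriv_two_apply, fderiv_const_mul_cexp_clm, hsecond.fderiv]
  simp only [ContinuousLinearMap.smulRight_apply, smul_apply, smul_eq_mul,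
    Matrix.cons_val_zero, Matrix.cons_val_one]
  ring

end ExpLinear

theorem laplacian_const_mul_cexp_clm (a : ℂ) (ℓ : V →L[ℝ] ℂ) (x : V) :
    laplacian (fun y => a * exp (ℓ y)) x
      = (∑ i, ℓ (EuclideanSpace.single i 1) ^ 2) * (a * exp (ℓ x)) := by
  simp only [laplacian, iteratedFDeriv_two_const_mul_cexp_clm, Finset.sum_mul]
  exact Finset.sum_congr rfl fun i _ => by ring

theorem sum_ofReal_mul_ofReal_eq_inner {ι : Type*} [Fintype ι] (d e : EuclideanSpace ℝ ι) :
    ∑ i, (d i : ℂ) * e i = (inner ℝ d e : ℝ) := by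
  simp [PiLp.inner_apply, mul_comm]

def planeWavePhase (d e : V) (D E : ℝ) : V →L[ℝ] ℂ :=
  (I * D) • ofRealCLM.comp (innerSL ℝ d) - (E : ℂ) • ofRealCLM.comp (innerSL ℝ e)

theorem planeWavePhase_apply (d e : V) (D E : ℝ) (x : V) :
    planeWavePhase d e D E x = I * D * (inner ℝ d x : ℝ) - E * (inner ℝ e x : ℝ) := by
  simp [planeWavePhase]

theorem planeWave_eq_const_mul_cexp (a : ℂ) (d e : V) (D E : ℝ) :
    planeWave a d e D E = fun x => a * exp (planeWavePhase d e D E x) := by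
  funext x
  rw [planeWave, planeWavePhase_apply]
  congr 2
  linear_combination (E : ℂ) * (inner ℝ e x : ℝ) * I_mul_I

theorem sum_sq_planeWavePhase_single (d e : V) (D E : ℝ) :
    ∑ i, planeWavePhase d e D E (EuclideanSpace.single i 1) ^ 2
      = E ^ 2 * ‖e‖ ^ 2 - D ^ 2 * ‖d‖ ^ 2 - 2 * I * D * E * (inner ℝ d e : ℝ) := by
  have hsq (v : V) : ((‖v‖ ^ 2 : ℝ) : ℂ) = ∑ i, (v i : ℂ) * v i := by
    rw [sum_ofReal_mul_ofReal_eq_inner, real_inner_self_eq_norm_sq]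
  push_cast at hsq
  simp only [planeWavePhase_apply, EuclideanSpace.inner_single_right, conj_trivial, one_mul, hsq,
    ← sum_ofReal_mul_ofReal_eq_inner, Finset.mul_sum, ← Finset.sum_sub_distrib]
  refine Finset.sum_congr rfl fun i _ => ?_
  linear_combination (D : ℂ) ^ 2 * (d i : ℂ) ^ 2 * I_mul_I

theorem laplacian_planeWave (a : ℂ) (d e : V) (D E : ℝ) (x : V) :
    laplacian (planeWave a d e D E) x
      = (E ^ 2 * ‖e‖ ^ 2 - D ^ 2 * ‖d‖ ^ 2 - 2 * I * D * E * (inner ℝ d e : ℝ))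
        * planeWave a d e D E x := by
  rw [planeWave_eq_const_mul_cexp, laplacian_const_mul_cexp_clm, sum_sq_planeWavePhase_single]

theorem helmholtz_dispersion_eq_zero_iff (D E η ξ c : ℝ) :
    (E : ℂ) ^ 2 - D ^ 2 - 2 * I * D * E * c + ((η : ℂ) + I * ξ) ^ 2 = 0
      ↔ D ^ 2 - E ^ 2 = η ^ 2 - ξ ^ 2 ∧ D * E * c = η * ξ := by
  have hsplit : (E : ℂ) ^ 2 - D ^ 2 - 2 * I * D * E * c + ((η : ℂ) + I * ξ) ^ 2
      = ((E ^ 2 - D ^ 2 + η ^ 2 - ξ ^ 2 : ℝ) : ℂ) + ((2 * (η * ξ - D * E * c) : ℝ) : ℂ) * I := by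
    push_cast
    linear_combination (ξ : ℂ) ^ 2 * I_mul_I
  rw [hsplit, Complex.ext_iff]
  simp only [add_re, add_im, ofReal_re, ofReal_im, re_ofReal_mul, im_ofReal_mul, I_re, I_im,
    mul_zero, mul_one, add_zero, zero_add, zero_re, zero_im]
  constructor <;> rintro ⟨h₁, h₂⟩ <;> constructor <;> linarith

theorem planeWave_helmholtz_iff (a : ℂ) (ha : a ≠ 0) (d e : V)
    (hd : ‖d‖ = 1) (he : ‖e‖ = 1) (D E η ξ : ℝ) :
    (∀ x : V, laplacian (planeWave a d e D E) x
        + ((η : ℂ) + Complex.I * (ξ : ℂ)) ^ 2 * planeWave a d e D E x = 0)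
      ↔ (D ^ 2 - E ^ 2 = η ^ 2 - ξ ^ 2 ∧ D * E * (inner ℝ d e : ℝ) = η * ξ) := by
  have hu₀ : planeWave a d e D E 0 ≠ 0 := mul_ne_zero ha (exp_ne_zero _)
  simp_rw [laplacian_planeWave, hd, he, ofReal_one, one_pow, mul_one, ← add_mul]
  rw [← helmholtz_dispersion_eq_zero_iff]
  exact ⟨fun h => (mul_eq_zero.1 (h 0)).resolve_right hu₀, fun h x => by rw [h, zero_mul]⟩
end
end

section
/- Let t, n ∈ ℝ² be orthonormal vectors. Let aⁱ, aʳ, aᵗ ∈ ℂ, let dⁱ, eⁱ, dᵗ, eᵗ ∈ ℝ² be unit vectors, and let D_i, E_i, D_t, E_t ∈ ℝ. Define the reflected direction vectors dʳ = dⁱ − 2⟪dⁱ,n⟫·n and eʳ = eⁱ − 2⟪eⁱ,n⟫·n. Suppose aⁱ + aʳ ≠ 0 and that for every x ∈ ℝ² with ⟪x,n⟫ = 0 one has aⁱ·exp(i·(D_i·⟪dⁱ,x⟫ + i·E_i·⟪eⁱ,x⟫)) + aʳ·exp(i·(D_i·⟪dʳ,x⟫ + i·E_i·⟪eʳ,x⟫))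 = aᵗ·exp(i·(D_t·⟪dᵗ,x⟫ + i·E_t·⟪eᵗ,x⟫)). Then aᵗ = aⁱ + aʳ, and Snell's law holds: D_i·⟪dⁱ,t⟫ = D_t·⟪dᵗ,t⟫ and E_i·⟪eⁱ,t⟫ = E_t·⟪eᵗ,t⟫. -/
/-!
On the interface the reflected wave coincides with the incident wave carrying amplitude `aʳ`,
so the matching condition says that two plane waves agree along the line `ℝ t`. Evaluating at
`0` compares the amplitudes; after cancelling the nonzero amplitude, `s ↦ exp (s z)` recovers `z`
as its derivative at `0`, and `z = i (D ⟪d, t⟫ + i E ⟪e, t⟫)` carries both tangential constants.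
-/

noncomputable section

open Complex

lemma Complex.eq_of_forall_exp_ofReal_mul_eq {z w : ℂ}
    (h : ∀ s : ℝ, exp (s * z) = exp (s * w)) : z = w := by
  have hasDerivAt_zero (c : ℂ) : HasDerivAt (fun s : ℝ => exp (s * c)) c 0 := by
    simpa using ((hasDerivAt_id (0 : ℂ)).mul_const c).cexp.comp_ofReal
  exact (hasDerivAt_zero z).unique (by simpa only [h] using hasDerivAt_zero w)

lemma Complex.ofReal_add_I_mul_ofReal_inj {p q p' q' : ℝ}
    (h : (p : ℂ) + I * q = p' + I * q') : p = p' ∧ q = q' := by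
  simpa [Complex.ext_iff] using h

lemma inner_sub_smul_left_of_inner_eq_zero {F : Type*} [NormedAddCommGroup F]
    [InnerProductSpace ℝ F] {n x : F} (hx : inner ℝ x n = (0 : ℝ)) (d : F) (c : ℝ) :
    inner ℝ (d - c • n) x = (inner ℝ d x : ℝ) := by
  rw [inner_sub_left, real_inner_smul_left, real_inner_comm x n, hx, mul_zero, sub_zero]

lemma planeWave_zero (a : ℂ) (d e : V) (D E : ℝ) : planeWave a d e D E 0 = a := by
  simp [planeWave]

lemma planeWave_smul (a : ℂ) (d e : V) (D E s : ℝ) (x : V) :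
    planeWave a d e D E (s • x) =
      a * exp (s * (I * (D * (inner ℝ d x : ℝ) + I * (E * (inner ℝ e x : ℝ))))) := by
  simp only [planeWave, real_inner_smul_right, ofReal_mul]
  ring_nf

lemma planeWave_add_planeWave (a b : ℂ) (d e : V) (D E : ℝ) (x : V) :
    planeWave a d e D E x + planeWave b d e D E x = planeWave (a + b) d e D E x := by
  simp only [planeWave, add_mul]

lemma planeWave_sub_smul_of_inner_eq_zero (a : ℂ) (d e n : V) (D E c c' : ℝ) {x : V}
    (hx : inner ℝ x n = (0 : ℝ)) :
    planeWave a (d - c • n) (e - c' • n) D E x = planeWave a d e D E x := by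
  simp only [planeWave, inner_sub_smul_left_of_inner_eq_zero hx]

lemma planeWave_eq_of_eqOn_line {a a' : ℂ} {d e d' e' : V} {D E D' E' : ℝ} (t : V) (ha : a ≠ 0)
    (h : ∀ s : ℝ, planeWave a d e D E (s • t) = planeWave a' d' e' D' E' (s • t)) :
    a = a' ∧ D * (inner ℝ d t : ℝ) = D' * (inner ℝ d' t : ℝ)
      ∧ E * (inner ℝ e t : ℝ) = E' * (inner ℝ e' t : ℝ) := by
  obtain rfl : a = a' := by simpa [planeWave_zero] using h 0
  simp only [planeWave_smul, mul_right_inj' ha] at h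
  have hexponent := mul_left_cancel₀ I_ne_zero (eq_of_forall_exp_ofReal_mul_eq h)
  exact ⟨rfl, ofReal_add_I_mul_ofReal_inj (by exact_mod_cast hexponent)⟩

theorem matching_on_interface_implies_snell_general
    (t n : V) (htn : (inner ℝ t n : ℝ) = 0)
    (aI aR aT : ℂ) (di ei dt et : V)
    (Di Ei Dt Et : ℝ)
    (dr : V) (hdr : dr = di - (2 * (inner ℝ di n : ℝ)) • n)
    (er : V) (her : er = ei - (2 * (inner ℝ ei n : ℝ)) • n)
    (hsum : aI + aR ≠ 0)
    (hmatch : ∀ x : V, (inner ℝ x n : ℝ) = 0 →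
      planeWave aI di ei Di Ei x + planeWave aR dr er Di Ei x
        = planeWave aT dt et Dt Et x) :
    aT = aI + aR ∧ Di * (inner ℝ di t : ℝ) = Dt * (inner ℝ dt t : ℝ)
      ∧ Ei * (inner ℝ ei t : ℝ) = Et * (inner ℝ et t : ℝ) := by
  have hline (s : ℝ) :
      planeWave (aI + aR) di ei Di Ei (s • t) = planeWave aT dt et Dt Et (s • t) := by
    have hs : inner ℝ (s • t) n = (0 : ℝ) := by rw [real_inner_smul_left, htn, mul_zero]
    rw [← hmatch _ hs, hdr, her, planeWave_sub_smul_of_inner_eq_zero _ _ _ _ _ _ _ _ hs,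
      planeWave_add_planeWave]
  obtain ⟨hamp, hD, hE⟩ := planeWave_eq_of_eqOn_line t hsum hline
  exact ⟨hamp.symm, hD, hE⟩

theorem matching_on_interface_implies_snell
    (t n : V) (ht : ‖t‖ = 1) (hn : ‖n‖ = 1) (htn : (inner ℝ t n : ℝ) = 0)
    (aI aR aT : ℂ) (di ei dt et : V)
    (hdi : ‖di‖ = 1) (hei : ‖ei‖ = 1) (hdt : ‖dt‖ = 1) (het : ‖et‖ = 1)
    (Di Ei Dt Et : ℝ)
    (dr : V) (hdr : dr = di - (2 * (inner ℝ di n : ℝ)) • n)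
    (er : V) (her : er = ei - (2 * (inner ℝ ei n : ℝ)) • n)
    (hsum : aI + aR ≠ 0)
    (hmatch : ∀ x : V, (inner ℝ x n : ℝ) = 0 →
      planeWave aI di ei Di Ei x + planeWave aR dr er Di Ei x
        = planeWave aT dt et Dt Et x) :
    aT = aI + aR ∧ Di * (inner ℝ di t : ℝ) = Dt * (inner ℝ dt t : ℝ)
      ∧ Ei * (inner ℝ ei t : ℝ) = Et * (inner ℝ et t : ℝ) :=
  matching_on_interface_implies_snell_general t n htn aI aR aT di ei dt et Di Ei Dt Et dr hdr er her
    hsum hmatch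
end
end

section
/- Let t, n ∈ ℝ² be orthonormal vectors. Let dⁱ, eⁱ, dᵗ, eᵗ ∈ ℝ² be unit vectors, let D_i, E_i, D_t, E_t ∈ ℝ, and define the reflected direction vectors dʳ = dⁱ − 2⟪dⁱ,n⟫·n and eʳ = eⁱ − 2⟪eⁱ,n⟫·n. Let uⁱ(x) = aⁱ·exp(i·(D_i·⟪dⁱ,x⟫ + i·E_i·⟪eⁱ,x⟫)), uʳ(x) = aʳ·exp(i·(D_i·⟪dʳ,x⟫ + i·E_i·⟪eʳ,x⟫)), uᵗ(x) = aᵗ·exp(i·(D_t·⟪dᵗ,x⟫ + i·E_t·⟪eᵗ,x⟫)), with aⁱ, aʳ, aᵗ ∈ ℂ. Set γ_i := D_i·⟪dⁱ,n⟫ + i·E_i·⟪eⁱ,n⟫ and γ_t := D_t·⟪dᵗ,n⟫ + i·E_t·⟪eᵗ,n⟫. Assume Snell's law: D_i·⟪dⁱ,t⟫ = D_t·⟪dᵗ,t⟫ and E_i·⟪eⁱ,t⟫ = E_t·⟪eᵗ,t⟫. Let α ∈ ℂ, and assume aⁱ ≠ 0 and γ_i + α·γ_t ≠ 0. Then the following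 are equivalent: (a) for every x ∈ ℝ² with ⟪x,n⟫ = 0, uⁱ(x) + uʳ(x) = uᵗ(x) and the directional derivatives in the direction n satisfy ∂ₙuⁱ(x) + ∂ₙuʳ(x) = α·∂ₙuᵗ(x); (b) the Fresnel formulas hold: aʳ = aⁱ·(γ_i − α·γ_t)/(γ_i + α·γ_t) and aᵗ = 2·aⁱ·γ_i/(γ_i + α·γ_t). -/
/-!
On the interface the reflected wave has the same phase as the incident one, and so does the
transmitted wave: in the plane the interface is the line `ℝ ∙ t`, where the phases agree by Snell's
law. A normal derivative multiplies a plane wave by `i γ`, and reflection flips the sign of `γ`.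
Dividing out the common nonvanishing exponential turns the transmission conditions into the linear
system `aI + aR = aT`, `(aI - aR) γi = α γt aT`, whose unique solution is given by the Fresnel
formulas. The system does not depend on the point, so testing at `x = 0` suffices.
-/

noncomputable section

open Complex

/-- Directional derivative of `u` at `x` in the direction `n`. -/
noncomputable def dirDeriv (u : V → ℂ) (n x : V) : ℂ := fderiv ℝ u x n

section InnerProductSpace

variable {F : Type*} [NormedAddCommGroup F] [InnerProductSpace ℝ F]

theorem inner_sub_two_inner_smul_self {d n : F} (hn : ‖n‖ = 1) :
    inner ℝ (d - (2 * inner ℝ d n) • n) n = -inner ℝ d n := by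
  rw [inner_sub_left, real_inner_smul_left, real_inner_self_eq_norm_sq, hn]
  ring

theorem inner_sub_two_inner_smul_of_inner_eq_zero {d n x : F} (hx : inner ℝ x n = 0) :
    inner ℝ (d - (2 * inner ℝ d n) • n) x = inner ℝ d x := by
  rw [inner_sub_left, real_inner_smul_left, real_inner_comm x n, hx, mul_zero, sub_zero]

/-- The paper's `γ` of a plane wave is `wavePhase d e D E n`. -/
def wavePhase (d e : F) (D E : ℝ) : F →L[ℝ] ℂ :=
  (D : ℂ) • (ofRealCLM.comp (innerSL ℝ d)) + (I * E) • (ofRealCLM.comp (innerSL ℝ e))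

theorem wavePhase_apply (d e : F) (D E : ℝ) (x : F) :
    wavePhase d e D E x = D * (inner ℝ d x : ℝ) + I * (E * (inner ℝ e x : ℝ)) := by
  simp only [wavePhase, add_apply, smul_apply, ContinuousLinearMap.comp_apply, coe_innerSL_apply,
    ofRealCLM_apply, smul_eq_mul, add_right_inj]
  ring

theorem wavePhase_reflect_self (d e : F) (D E : ℝ) {n : F} (hn : ‖n‖ = 1) :
    wavePhase (d - (2 * inner ℝ d n) • n) (e - (2 * inner ℝ e n) • n) D E n
      = -wavePhase d e D E n := by
  simp only [wavePhase_apply, inner_sub_two_inner_smul_self hn, ofReal_neg]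
  ring

theorem wavePhase_reflect_of_inner_eq_zero (d e : F) (D E : ℝ) {n x : F}
    (hx : inner ℝ x n = 0) :
    wavePhase (d - (2 * inner ℝ d n) • n) (e - (2 * inner ℝ e n) • n) D E x
      = wavePhase d e D E x := by
  simp only [wavePhase_apply, inner_sub_two_inner_smul_of_inner_eq_zero hx]

theorem wavePhase_eq_of_snell (hF : Module.finrank ℝ F = 2) {t n : F} (ht : t ≠ 0) (hn : n ≠ 0)
    (htn : inner ℝ t n = 0) {d e d' e' : F} {D E D' E' : ℝ}
    (hD : D * inner ℝ d t = D' * inner ℝ d' t) (hE : E * inner ℝ e t = E' * inner ℝ e' t)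
    {x : F} (hx : inner ℝ x n = 0) :
    wavePhase d e D E x = wavePhase d' e' D' E' x := by
  have : Fact (Module.finrank ℝ F = 2) := ⟨hF⟩
  obtain ⟨c, rfl⟩ := Submodule.mem_span_singleton.1 <|
    Submodule.mem_span_singleton_of_inner_eq_zero_of_inner_eq_zero (𝕜 := ℝ) hn ht
      (by rwa [real_inner_comm]) (by rwa [real_inner_comm])
  have hDc : (D : ℂ) * (inner ℝ d t : ℝ) = D' * (inner ℝ d' t : ℝ) := by exact_mod_cast hD
  have hEc : (E : ℂ) * (inner ℝ e t : ℝ) = E' * (inner ℝ e' t : ℝ) := by exact_mod_cast hE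
  rw [map_smul, map_smul, wavePhase_apply, wavePhase_apply, hDc, hEc]

end InnerProductSpace

theorem planeWave_eq_mul_exp (a : ℂ) (d e : V) (D E : ℝ) (x : V) :
    planeWave a d e D E x = a * exp (I * wavePhase d e D E x) := by
  rw [wavePhase_apply, planeWave]

theorem dirDeriv_planeWave (a : ℂ) (d e : V) (D E : ℝ) (v x : V) :
    dirDeriv (planeWave a d e D E) v x = I * wavePhase d e D E v * planeWave a d e D E x := by
  have hpw : planeWave a d e D E = fun y ↦ a * exp ((I • wavePhase d e D E) y) :=
    funext (planeWave_eq_mul_exp a d e D E)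
  rw [dirDeriv, hpw, ((I • wavePhase d e D E).hasFDerivAt.cexp.const_mul a).fderiv]
  simp only [smul_apply, smul_eq_mul]
  ring

theorem transmission_conditions_at_iff {t n : V} (ht : t ≠ 0) (hn : ‖n‖ = 1)
    (htn : inner ℝ t n = 0) {di ei dt et : V} {Di Ei Dt Et : ℝ}
    (hSnellD : Di * inner ℝ di t = Dt * inner ℝ dt t)
    (hSnellE : Ei * inner ℝ ei t = Et * inner ℝ et t) (aI aR aT α : ℂ)
    {x : V} (hx : inner ℝ x n = 0) :
    (planeWave aI di ei Di Ei x
          + planeWave aR (di - (2 * inner ℝ di n) • n) (ei - (2 * inner ℝ ei n) • n) Di Ei x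
        = planeWave aT dt et Dt Et x
      ∧ dirDeriv (planeWave aI di ei Di Ei) n x
          + dirDeriv (planeWave aR (di - (2 * inner ℝ di n) • n)
              (ei - (2 * inner ℝ ei n) • n) Di Ei) n x
        = α * dirDeriv (planeWave aT dt et Dt Et) n x)
      ↔ (aI + aR = aT
        ∧ (aI - aR) * wavePhase di ei Di Ei n = α * (aT * wavePhase dt et Dt Et n)) := by
  have hn0 : n ≠ 0 := ne_zero_of_norm_ne_zero (hn ▸ one_ne_zero)
  simp only [dirDeriv_planeWave, planeWave_eq_mul_exp, wavePhase_reflect_self _ _ _ _ hn,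
    wavePhase_reflect_of_inner_eq_zero _ _ _ _ hx,
    wavePhase_eq_of_snell finrank_euclideanSpace_fin ht hn0 htn hSnellD hSnellE hx]
  set Ψ := exp (I * wavePhase dt et Dt Et x)
  have hΨ : I * Ψ ≠ 0 := mul_ne_zero I_ne_zero (exp_ne_zero _)
  refine and_congr ⟨fun h ↦ mul_right_cancel₀ (exp_ne_zero _) (by linear_combination h),
    fun h ↦ by linear_combination Ψ * h⟩
    ⟨fun h ↦ mul_right_cancel₀ hΨ (by linear_combination h),
      fun h ↦ by linear_combination I * Ψ * h⟩

theorem amplitudes_iff_fresnel {K : Type*} [Field K] {γi γt α aI aR aT : K}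
    (hden : γi + α * γt ≠ 0) :
    (aI + aR = aT ∧ (aI - aR) * γi = α * (aT * γt))
      ↔ (aR = aI * (γi - α * γt) / (γi + α * γt) ∧ aT = 2 * aI * γi / (γi + α * γt)) := by
  rw [eq_div_iff hden, eq_div_iff hden]
  constructor
  · rintro ⟨h₁, h₂⟩
    exact ⟨by linear_combination (α * γt) * h₁ - h₂, by linear_combination -(γi * h₁) - h₂⟩
  · rintro ⟨hR, hT⟩
    refine ⟨mul_right_cancel₀ hden ?_, mul_right_cancel₀ hden ?_⟩
    · linear_combination hR - hT
    · linear_combination -(γi * hR) - (α * γt) * hT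

theorem transmission_conditions_iff_fresnel_general
    (t n : V) (ht : ‖t‖ = 1) (hn : ‖n‖ = 1) (htn : (inner ℝ t n : ℝ) = 0)
    (di ei dt et : V)
    (Di Ei Dt Et : ℝ)
    (dr : V) (hdr : dr = di - (2 * (inner ℝ di n : ℝ)) • n)
    (er : V) (her : er = ei - (2 * (inner ℝ ei n : ℝ)) • n)
    (aI aR aT : ℂ)
    (γi γt : ℂ)
    (hγi : γi = (Di : ℂ) * ((inner ℝ di n : ℝ) : ℂ) + Complex.I * ((Ei : ℂ) * ((inner ℝ ei n : ℝ) : ℂ)))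
    (hγt : γt = (Dt : ℂ) * ((inner ℝ dt n : ℝ) : ℂ) + Complex.I * ((Et : ℂ) * ((inner ℝ et n : ℝ) : ℂ)))
    (hSnellD : Di * (inner ℝ di t : ℝ) = Dt * (inner ℝ dt t : ℝ))
    (hSnellE : Ei * (inner ℝ ei t : ℝ) = Et * (inner ℝ et t : ℝ))
    (α : ℂ) (hden : γi + α * γt ≠ 0) :
    (∀ x : V, (inner ℝ x n : ℝ) = 0 →
        (planeWave aI di ei Di Ei x + planeWave aR dr er Di Ei x
            = planeWave aT dt et Dt Et x
          ∧ dirDeriv (planeWave aI di ei Di Ei) n x + dirDeriv (planeWave aR dr er Di Ei) n x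
            = α * dirDeriv (planeWave aT dt et Dt Et) n x))
      ↔ (aR = aI * (γi - α * γt) / (γi + α * γt)
          ∧ aT = 2 * aI * γi / (γi + α * γt)) := by
  subst hdr her
  rw [← wavePhase_apply] at hγi hγt
  have ht0 : t ≠ 0 := ne_zero_of_norm_ne_zero (ht ▸ one_ne_zero)
  have hiff := fun x ↦ transmission_conditions_at_iff ht0 hn htn hSnellD hSnellE aI aR aT α (x := x)
  rw [← amplitudes_iff_fresnel hden, hγi, hγt]
  exact ⟨fun h ↦ (hiff 0 (inner_zero_left n)).1 (h 0 (inner_zero_left n)),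
    fun h x hx ↦ (hiff x hx).2 h⟩

theorem transmission_conditions_iff_fresnel
    (t n : V) (ht : ‖t‖ = 1) (hn : ‖n‖ = 1) (htn : (inner ℝ t n : ℝ) = 0)
    (di ei dt et : V)
    (hdi : ‖di‖ = 1) (hei : ‖ei‖ = 1) (hdt : ‖dt‖ = 1) (het : ‖et‖ = 1)
    (Di Ei Dt Et : ℝ)
    (dr : V) (hdr : dr = di - (2 * (inner ℝ di n : ℝ)) • n)
    (er : V) (her : er = ei - (2 * (inner ℝ ei n : ℝ)) • n)
    (aI aR aT : ℂ)
    (γi γt : ℂ)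
    (hγi : γi = (Di : ℂ) * ((inner ℝ di n : ℝ) : ℂ) + Complex.I * ((Ei : ℂ) * ((inner ℝ ei n : ℝ) : ℂ)))
    (hγt : γt = (Dt : ℂ) * ((inner ℝ dt n : ℝ) : ℂ) + Complex.I * ((Et : ℂ) * ((inner ℝ et n : ℝ) : ℂ)))
    (hSnellD : Di * (inner ℝ di t : ℝ) = Dt * (inner ℝ dt t : ℝ))
    (hSnellE : Ei * (inner ℝ ei t : ℝ) = Et * (inner ℝ et t : ℝ))
    (α : ℂ) (haI : aI ≠ 0) (hden : γi + α * γt ≠ 0) :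
    (∀ x : V, (inner ℝ x n : ℝ) = 0 →
        (planeWave aI di ei Di Ei x + planeWave aR dr er Di Ei x
            = planeWave aT dt et Dt Et x
          ∧ dirDeriv (planeWave aI di ei Di Ei) n x + dirDeriv (planeWave aR dr er Di Ei) n x
            = α * dirDeriv (planeWave aT dt et Dt Et) n x))
      ↔ (aR = aI * (γi - α * γt) / (γi + α * γt)
          ∧ aT = 2 * aI * γi / (γi + α * γt)) :=
  transmission_conditions_iff_fresnel_general t n ht hn htn di ei dt et Di Ei Dt Et dr hdr er her aI
    aR aT γi γt hγi hγt hSnellD hSnellE α hden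
end
end

section
/- Let t, n ∈ ℝ² be orthonormal vectors. Let dⁱ, eⁱ, dᵗ, eᵗ ∈ ℝ² be unit vectors and let D_i > 0, E_i > 0, D_t > 0, E_t > 0 be real numbers. Assume Snell's law: D_t·⟪dᵗ,t⟫ = D_i·⟪dⁱ,t⟫ and E_t·⟪eᵗ,t⟫ = E_i·⟪eⁱ,t⟫; assume the second medium is non-absorbing, i.e., the transmitted Helmholtz constraint reads D_t·E_t·⟪dᵗ,eᵗ⟫ = 0; and assume ⟪dⁱ,t⟫·⟪eⁱ,t⟫ > 0. Then ⟪dᵗ,n⟫·⟪eᵗ,n⟫ < 0. In particular, the conditions GO1 (⟪dᵗ,n⟫ ≥ 0) and GO2 (⟪eᵗ,n⟫ ≥ 0) cannot both hold. -/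
noncomputable section

/-!
Expanding in the orthonormal basis `(t, n)` of the plane, the transmitted constraint
`⟪dᵗ, eᵗ⟫ = 0` reads `⟪dᵗ, t⟫⟪eᵗ, t⟫ + ⟪dᵗ, n⟫⟪eᵗ, n⟫ = 0`. Snell's law rescales the tangential
components by positive factors, so `⟪dᵗ, t⟫⟪eᵗ, t⟫` has the sign of `⟪dⁱ, t⟫⟪eⁱ, t⟫ > 0`, which
forces `⟪dᵗ, n⟫⟪eᵗ, n⟫ < 0`.
-/

section OrthonormalPair

variable {E : Type*} [NormedAddCommGroup E] [InnerProductSpace ℝ E] {t n : E}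

theorem real_inner_eq_of_orthonormal_of_finrank_eq_two (hE : Module.finrank ℝ E = 2)
    (hon : Orthonormal ℝ ![t, n]) (x y : E) :
    (inner ℝ x y : ℝ) = inner ℝ x t * inner ℝ y t + inner ℝ x n * inner ℝ y n := by
  have hspan : ⊤ ≤ Submodule.span ℝ (Set.range ![t, n]) :=
    (hon.linearIndependent.span_eq_top_of_card_eq_finrank (by simp [hE])).ge
  simpa [Fin.sum_univ_two, real_inner_comm _ y] using
    ((OrthonormalBasis.mk hon hspan).sum_inner_mul_inner x y).symm

theorem inner_mul_inner_neg_of_inner_eq_zero (hE : Module.finrank ℝ E = 2)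
    (hon : Orthonormal ℝ ![t, n]) {x y : E} (hxy : (inner ℝ x y : ℝ) = 0)
    (htan : 0 < (inner ℝ x t : ℝ) * inner ℝ y t) :
    (inner ℝ x n : ℝ) * inner ℝ y n < 0 := by
  have hdecomp := real_inner_eq_of_orthonormal_of_finrank_eq_two hE hon x y
  linarith

end OrthonormalPair

theorem mul_pos_of_mul_eq_mul_of_mul_eq_mul {K : Type*} [CommRing K] [LinearOrder K]
    [IsStrictOrderedRing K] {a b c d x y u v : K} (ha : 0 < a) (hb : 0 < b)
    (hc : 0 < c) (hd : 0 < d) (hx : a * x = c * u) (hy : b * y = d * v) (huv : 0 < u * v) :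
    0 < x * y := by
  have h : 0 < (a * b) * (x * y) :=
    calc 0 < (c * d) * (u * v) := mul_pos (mul_pos hc hd) huv
      _ = (a * b) * (x * y) := by linear_combination -(b * y) * hx - (c * u) * hy
  exact pos_of_mul_pos_right h (mul_pos ha hb).le

theorem GO1_GO2_incompatible_general
    (t n : V) (ht : ‖t‖ = 1) (hn : ‖n‖ = 1) (htn : (inner ℝ t n : ℝ) = 0)
    (di ei dt et : V)
    (Di Ei Dt Et : ℝ) (hDi : 0 < Di) (hEi : 0 < Ei) (hDt : 0 < Dt) (hEt : 0 < Et)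
    (hSnellD : Dt * (inner ℝ dt t : ℝ) = Di * (inner ℝ di t : ℝ))
    (hSnellE : Et * (inner ℝ et t : ℝ) = Ei * (inner ℝ ei t : ℝ))
    (hHelm : Dt * Et * (inner ℝ dt et : ℝ) = 0)
    (hsame : 0 < (inner ℝ di t : ℝ) * (inner ℝ ei t : ℝ)) :
    (inner ℝ dt n : ℝ) * (inner ℝ et n : ℝ) < 0
      ∧ ¬((0 : ℝ) ≤ (inner ℝ dt n : ℝ) ∧ (0 : ℝ) ≤ (inner ℝ et n : ℝ)) := by
  have hon : Orthonormal ℝ ![t, n] := by simp [ht, hn, htn]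
  have horth : (inner ℝ dt et : ℝ) = 0 :=
    (mul_eq_zero.mp hHelm).resolve_left (mul_pos hDt hEt).ne'
  have htan : 0 < (inner ℝ dt t : ℝ) * inner ℝ et t :=
    mul_pos_of_mul_eq_mul_of_mul_eq_mul hDt hEt hDi hEi hSnellD hSnellE hsame
  have hnormal : (inner ℝ dt n : ℝ) * inner ℝ et n < 0 :=
    inner_mul_inner_neg_of_inner_eq_zero finrank_euclideanSpace_fin hon horth htan
  exact ⟨hnormal, fun ⟨hd, he⟩ => (mul_nonneg hd he).not_gt hnormal⟩

theorem GO1_GO2_incompatible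
    (t n : V) (ht : ‖t‖ = 1) (hn : ‖n‖ = 1) (htn : (inner ℝ t n : ℝ) = 0)
    (di ei dt et : V)
    (hdi : ‖di‖ = 1) (hei : ‖ei‖ = 1) (hdt : ‖dt‖ = 1) (het : ‖et‖ = 1)
    (Di Ei Dt Et : ℝ) (hDi : 0 < Di) (hEi : 0 < Ei) (hDt : 0 < Dt) (hEt : 0 < Et)
    (hSnellD : Dt * (inner ℝ dt t : ℝ) = Di * (inner ℝ di t : ℝ))
    (hSnellE : Et * (inner ℝ et t : ℝ) = Ei * (inner ℝ ei t : ℝ))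
    (hHelm : Dt * Et * (inner ℝ dt et : ℝ) = 0)
    (hsame : 0 < (inner ℝ di t : ℝ) * (inner ℝ ei t : ℝ)) :
    (inner ℝ dt n : ℝ) * (inner ℝ et n : ℝ) < 0
      ∧ ¬((0 : ℝ) ≤ (inner ℝ dt n : ℝ) ∧ (0 : ℝ) ≤ (inner ℝ et n : ℝ)) :=
  GO1_GO2_incompatible_general t n ht hn htn di ei dt et Di Ei Dt Et hDi hEi hDt hEt hSnellD hSnellE
    hHelm hsame
end
end

section
/- Let t, n ∈ ℝ² be orthonormal vectors. Let dⁱ, eⁱ, dᵗ, eᵗ ∈ ℝ² be unit vectors and let D_i, E_i ∈ ℝ, D_t > 0, E_t > 0, η̃, ξ̃ ∈ ℝ. Assume Snell's law: D_t·⟪dᵗ,t⟫ = D_i·⟪dⁱ,t⟫ and E_t·⟪eᵗ,t⟫ = E_i·⟪eⁱ,t⟫, and the transmitted Helmholtz constraint D_t·E_t·⟪dᵗ,eᵗ⟫ = η̃·ξ̃. If η̃·ξ̃ > D_i·E_i·⟪dⁱ,t⟫·⟪eⁱ,t⟫, then ⟪dᵗ,n⟫·⟪eᵗ,n⟫ >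 0; in particular ⟪dᵗ,n⟫ > 0 if and only if ⟪eᵗ,n⟫ > 0, so the conditions GO1 (⟪dᵗ,n⟫ ≥ 0) and GO2 (⟪eᵗ,n⟫ ≥ 0) are compatible (either both hold or both fail). -/
noncomputable section

/-!
Expanding in the orthonormal basis `t, n` of the plane,
`Dₜ Eₜ ⟪dᵗ, eᵗ⟫ = (Dₜ ⟪dᵗ, t⟫)(Eₜ ⟪eᵗ, t⟫) + Dₜ Eₜ ⟪dᵗ, n⟫ ⟪eᵗ, n⟫`.
By Snell's law the tangential term equals `Dᵢ Eᵢ ⟪dⁱ, t⟫ ⟪eⁱ, t⟫`, and by the Helmholtz constraint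
the left side is `η̃ ξ̃`, so `Dₜ Eₜ ⟪dᵗ, n⟫ ⟪eᵗ, n⟫ = η̃ ξ̃ - Dᵢ Eᵢ ⟪dⁱ, t⟫ ⟪eⁱ, t⟫ > 0`.
-/

open scoped RealInnerProductSpace

theorem real_inner_eq_of_orthonormal_of_finrank_eq_two_s7 {E : Type*} [NormedAddCommGroup E]
    [InnerProductSpace ℝ E] [FiniteDimensional ℝ E] (hE : Module.finrank ℝ E = 2) {t n : E}
    (ht : ‖t‖ = 1) (hn : ‖n‖ = 1) (htn : ⟪t, n⟫ = 0) (x y : E) :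
    ⟪x, y⟫ = ⟪x, t⟫ * ⟪y, t⟫ + ⟪x, n⟫ * ⟪y, n⟫ := by
  have hon : Orthonormal ℝ ![t, n] := by simp [ht, hn, htn]
  let b := OrthonormalBasis.mk hon
    (hon.linearIndependent.span_eq_top_of_card_eq_finrank' (by simp [hE])).ge
  have hb : ⇑b = ![t, n] := OrthonormalBasis.coe_mk _ _
  rw [← b.sum_inner_mul_inner x y, Fin.sum_univ_two, hb, real_inner_comm t y, real_inner_comm n y]
  rfl

theorem GO1_GO2_compatible_of_lt_general
    (t n : V) (ht : ‖t‖ = 1) (hn : ‖n‖ = 1) (htn : (inner ℝ t n : ℝ) = 0)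
    (di ei dt et : V)
    (Di Ei : ℝ) (Dt Et ηt ξt : ℝ) (hDt : 0 < Dt) (hEt : 0 < Et)
    (hSnellD : Dt * (inner ℝ dt t : ℝ) = Di * (inner ℝ di t : ℝ))
    (hSnellE : Et * (inner ℝ et t : ℝ) = Ei * (inner ℝ ei t : ℝ))
    (hHelm : Dt * Et * (inner ℝ dt et : ℝ) = ηt * ξt)
    (hlt : Di * Ei * ((inner ℝ di t : ℝ) * (inner ℝ ei t : ℝ)) < ηt * ξt) :
    0 < (inner ℝ dt n : ℝ) * (inner ℝ et n : ℝ)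
      ∧ ((0 : ℝ) < (inner ℝ dt n : ℝ) ↔ (0 : ℝ) < (inner ℝ et n : ℝ))
      ∧ (((0 : ℝ) ≤ (inner ℝ dt n : ℝ) ∧ (0 : ℝ) ≤ (inner ℝ et n : ℝ))
          ∨ (¬(0 : ℝ) ≤ (inner ℝ dt n : ℝ) ∧ ¬(0 : ℝ) ≤ (inner ℝ et n : ℝ))) := by
  have hnormal : Dt * Et * (⟪dt, n⟫ * ⟪et, n⟫) = ηt * ξt - Di * Ei * (⟪di, t⟫ * ⟪ei, t⟫) := by
    rw [real_inner_eq_of_orthonormal_of_finrank_eq_two_s7 (by simp) ht hn htn dt et] at hHelm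
    linear_combination hHelm - Et * ⟪et, t⟫ * hSnellD - Di * ⟪di, t⟫ * hSnellE
  have hpos : 0 < ⟪dt, n⟫ * ⟪et, n⟫ :=
    pos_of_mul_pos_right (hnormal ▸ sub_pos.2 hlt) (mul_pos hDt hEt).le
  refine ⟨hpos, pos_iff_pos_of_mul_pos hpos, ?_⟩
  rcases mul_pos_iff.1 hpos with ⟨hd, he⟩ | ⟨hd, he⟩
  · exact .inl ⟨hd.le, he.le⟩
  · exact .inr ⟨hd.not_ge, he.not_ge⟩

theorem GO1_GO2_compatible_of_lt
    (t n : V) (ht : ‖t‖ = 1) (hn : ‖n‖ = 1) (htn : (inner ℝ t n : ℝ) = 0)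
    (di ei dt et : V)
    (hdi : ‖di‖ = 1) (hei : ‖ei‖ = 1) (hdt : ‖dt‖ = 1) (het : ‖et‖ = 1)
    (Di Ei : ℝ) (Dt Et ηt ξt : ℝ) (hDt : 0 < Dt) (hEt : 0 < Et)
    (hSnellD : Dt * (inner ℝ dt t : ℝ) = Di * (inner ℝ di t : ℝ))
    (hSnellE : Et * (inner ℝ et t : ℝ) = Ei * (inner ℝ ei t : ℝ))
    (hHelm : Dt * Et * (inner ℝ dt et : ℝ) = ηt * ξt)
    (hlt : Di * Ei * ((inner ℝ di t : ℝ) * (inner ℝ ei t : ℝ)) < ηt * ξt) :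
    0 < (inner ℝ dt n : ℝ) * (inner ℝ et n : ℝ)
      ∧ ((0 : ℝ) < (inner ℝ dt n : ℝ) ↔ (0 : ℝ) < (inner ℝ et n : ℝ))
      ∧ (((0 : ℝ) ≤ (inner ℝ dt n : ℝ) ∧ (0 : ℝ) ≤ (inner ℝ et n : ℝ))
          ∨ (¬(0 : ℝ) ≤ (inner ℝ dt n : ℝ) ∧ ¬(0 : ℝ) ≤ (inner ℝ et n : ℝ))) :=
  GO1_GO2_compatible_of_lt_general t n ht hn htn di ei dt et Di Ei Dt Et ηt ξt hDt hEt hSnellD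
    hSnellE hHelm hlt
end
end

section
/- Let η̃, ξ̃, Ñ, Ẽ ∈ ℝ, and define D_t := sqrt( ( η̃² − ξ̃² + Ñ² + Ẽ² + sqrt( (η̃² − ξ̃² − Ñ² + Ẽ²)² + 4·(Ñ·Ẽ − η̃·ξ̃)² ) ) / 2 ) and E_t := sqrt(D_t² + ξ̃² − η̃²). Then: (i) D_t² ≥ Ñ²; (ii) D_t² ≥ η̃² − ξ̃² + Ẽ², so that D_t² + ξ̃² − η̃² ≥ Ẽ² ≥ 0 and E_t is a well-defined real number with E_t² ≥ Ẽ²; (iii) D_t² − E_t² = η̃² − ξ̃²; and (iv) (D_t² − Ñ²)·(E_t² − Ẽ²) = (Ñ·Ẽ − η̃·ξ̃)². -/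
/-!
With `B = η̃² - ξ̃² - Ñ² + Ẽ²`, `C = ÑẼ - η̃ξ̃` and `S = √(B² + 4C²)`, the definitions give
`D_t² - Ñ² = (S + B)/2` and `E_t² - Ẽ² = (S - B)/2`. Both are nonnegative because `|B| ≤ S`,
and their product is `(S² - B²)/4 = C²`.
-/

theorem abs_le_sqrt_sq_add {b c : ℝ} (hc : 0 ≤ c) : |b| ≤ √(b ^ 2 + c) := by
  rw [← Real.sqrt_sq_eq_abs]
  exact Real.sqrt_le_sqrt (by linarith)

theorem sqrt_sq_add_sub_mul_sqrt_sq_add_add {b c : ℝ} (hc : 0 ≤ c) :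
    (√(b ^ 2 + c) - b) * (√(b ^ 2 + c) + b) = c := by
  linear_combination Real.sq_sqrt (by positivity : 0 ≤ b ^ 2 + c)

theorem transmitted_constants_properties (ηt ξt Nt Et' : ℝ)
    (Dt : ℝ)
    (hDt : Dt = Real.sqrt ((ηt ^ 2 - ξt ^ 2 + Nt ^ 2 + Et' ^ 2
      + Real.sqrt ((ηt ^ 2 - ξt ^ 2 - Nt ^ 2 + Et' ^ 2) ^ 2
        + 4 * (Nt * Et' - ηt * ξt) ^ 2)) / 2))
    (Et : ℝ) (hEt : Et = Real.sqrt (Dt ^ 2 + ξt ^ 2 - ηt ^ 2)) :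
    Nt ^ 2 ≤ Dt ^ 2
      ∧ (ηt ^ 2 - ξt ^ 2 + Et' ^ 2 ≤ Dt ^ 2
          ∧ Et' ^ 2 ≤ Dt ^ 2 + ξt ^ 2 - ηt ^ 2 ∧ (0 : ℝ) ≤ Et' ^ 2
          ∧ Et' ^ 2 ≤ Et ^ 2)
      ∧ Dt ^ 2 - Et ^ 2 = ηt ^ 2 - ξt ^ 2
      ∧ (Dt ^ 2 - Nt ^ 2) * (Et ^ 2 - Et' ^ 2) = (Nt * Et' - ηt * ξt) ^ 2 := by
  set B := ηt ^ 2 - ξt ^ 2 - Nt ^ 2 + Et' ^ 2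
  set C := Nt * Et' - ηt * ξt
  set S := √(B ^ 2 + 4 * C ^ 2)
  have hC : 0 ≤ 4 * C ^ 2 := by positivity
  obtain ⟨hSB, hBS⟩ := abs_le.mp (abs_le_sqrt_sq_add (b := B) hC)
  have hD : Dt ^ 2 - Nt ^ 2 = (S + B) / 2 := by
    rw [hDt, Real.sq_sqrt (by linarith [sq_nonneg Nt])]
    linarith
  have hE : Et ^ 2 - Et' ^ 2 = (S - B) / 2 := by
    rw [hEt, Real.sq_sqrt (by linarith [sq_nonneg Et'])]
    linarith
  refine ⟨by linarith, ⟨by linarith, by linarith, sq_nonneg _, by linarith⟩, by linarith, ?_⟩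
  rw [hD, hE]
  linear_combination sqrt_sq_add_sub_mul_sqrt_sq_add_add (b := B) hC / 4
end

section
/- Let t, n ∈ ℝ² be orthonormal vectors. Let η̃ > 0, ξ̃ > 0 and Ñ, Ẽ ∈ ℝ, and define D_t := sqrt( ( η̃² − ξ̃² + Ñ² + Ẽ² + sqrt( (η̃² − ξ̃² − Ñ² + Ẽ²)² + 4·(Ñ·Ẽ − η̃·ξ̃)² ) ) / 2 ) and E_t := sqrt(D_t² + ξ̃² − η̃²). Then D_t > 0 and E_t > 0, and there exist unit vectors dᵗ, eᵗ ∈ ℝ² such that D_t·⟪dᵗ,t⟫ = Ñ, E_t·⟪eᵗ,t⟫ = Ẽ, D_t² − E_t² = η̃² − ξ̃², and D_t·E_t·⟪dᵗ,eᵗ⟫ = η̃·ξ̃. (Equivalently: there exists a transmitted plane wave in the second medium satisfying both Snell's law relative to incident tangential data Ñ, Ẽ and the Helmholtz constraints for the wavenumber k̃ = η̃ + iξ̃.) -/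
/-!
Write the unknown wave vectors in the frame (t, n) as `Dt • dt = Ñ • t + b • n` and
`Et • et = Ẽ • t + b' • n`. Then the two Helmholtz constraints say exactly that
`(Ñ + iẼ)² + (b + ib')² = (η̃ + iξ̃)²`, so `b + ib'` is a complex square root of `k̃² - (Ñ + iẼ)²`;
the formula for `Dt` is `Dt² = Ñ² + b²` with `b` the real part of that square root. Positivity of `Dt`
and `Et` follows from Cauchy–Schwarz, since `Ñ Ẽ + b b' = η̃ ξ̃ > 0`.
-/

noncomputable section

open Real RealInnerProductSpace

/-- `(b + ib')² = A + 2ic`: a complex square root, in real coordinates. -/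
theorem exists_sq_sub_sq_eq_and_mul_eq (A c : ℝ) :
    ∃ b b' : ℝ, b ^ 2 = (A + √(A ^ 2 + 4 * c ^ 2)) / 2 ∧ b ^ 2 - b' ^ 2 = A ∧ b * b' = c := by
  set S := √(A ^ 2 + 4 * c ^ 2)
  have hAS : |A| ≤ S := abs_le_sqrt (by nlinarith [sq_nonneg c])
  have hP : 0 ≤ (A + S) / 2 := by linarith [neg_abs_le A]
  have hQ : 0 ≤ (S - A) / 2 := by linarith [le_abs_self A]
  have hPQ : √((A + S) / 2) * √((S - A) / 2) = |c| := by
    rw [← sqrt_mul hP, ← sqrt_sq_eq_abs]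
    congr 1
    linear_combination (sq_sqrt (by positivity : 0 ≤ A ^ 2 + 4 * c ^ 2)) / 4
  refine ⟨√((A + S) / 2), if 0 ≤ c then √((S - A) / 2) else -√((S - A) / 2),
    sq_sqrt hP, ?_, ?_⟩
  · split_ifs <;> rw [sq_sqrt hP] <;> simp only [neg_sq, sq_sqrt hQ] <;> ring
  · split_ifs with hc
    · rw [hPQ, abs_of_nonneg hc]
    · rw [mul_neg, hPQ, abs_of_neg (not_le.mp hc), neg_neg]

section Orthonormal

variable {F : Type*} [NormedAddCommGroup F] [InnerProductSpace ℝ F] {t n : F}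

theorem inner_smul_add_smul_of_orthonormal (ht : ‖t‖ = 1) (hn : ‖n‖ = 1) (htn : ⟪t, n⟫ = 0)
    (a b c d : ℝ) : ⟪a • t + b • n, c • t + d • n⟫ = a * c + b * d := by
  simp only [inner_add_left, inner_add_right, real_inner_smul_left, real_inner_smul_right,
    real_inner_self_eq_norm_sq, ht, hn, htn, real_inner_comm t n]
  ring

theorem inner_smul_add_smul_left_of_orthonormal (ht : ‖t‖ = 1) (hn : ‖n‖ = 1)
    (htn : ⟪t, n⟫ = 0) (a b : ℝ) : ⟪a • t + b • n, t⟫ = a := by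
  simpa using inner_smul_add_smul_of_orthonormal ht hn htn a b 1 0

theorem exists_norm_eq_one_smul_eq_of_orthonormal (ht : ‖t‖ = 1) (hn : ‖n‖ = 1)
    (htn : ⟪t, n⟫ = 0) {D a b : ℝ} (hD0 : D ≠ 0) (hD : D = √(a ^ 2 + b ^ 2)) :
    ∃ d : F, ‖d‖ = 1 ∧ D • d = a • t + b • n := by
  have hnorm : ‖a • t + b • n‖ = D := by
    rw [norm_eq_sqrt_real_inner, inner_smul_add_smul_of_orthonormal ht hn htn, hD]
    ring_nf
  have hx : a • t + b • n ≠ 0 := fun h ↦ hD0 (by rw [← hnorm, h, norm_zero])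
  refine ⟨D⁻¹ • (a • t + b • n), ?_, smul_inv_smul₀ hD0 _⟩
  simpa [hnorm] using norm_smul_inv_norm (𝕜 := ℝ) hx

end Orthonormal

theorem exists_transmitted_directions
    (t n : V) (ht : ‖t‖ = 1) (hn : ‖n‖ = 1) (htn : (inner ℝ t n : ℝ) = 0)
    (ηt ξt : ℝ) (hηt : 0 < ηt) (hξt : 0 < ξt) (Nt Et' : ℝ)
    (Dt : ℝ)
    (hDt : Dt = Real.sqrt ((ηt ^ 2 - ξt ^ 2 + Nt ^ 2 + Et' ^ 2
      + Real.sqrt ((ηt ^ 2 - ξt ^ 2 - Nt ^ 2 + Et' ^ 2) ^ 2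
        + 4 * (Nt * Et' - ηt * ξt) ^ 2)) / 2))
    (Et : ℝ) (hEt : Et = Real.sqrt (Dt ^ 2 + ξt ^ 2 - ηt ^ 2)) :
    0 < Dt ∧ 0 < Et ∧
      ∃ dt et : V, ‖dt‖ = 1 ∧ ‖et‖ = 1
        ∧ Dt * (inner ℝ dt t : ℝ) = Nt
        ∧ Et * (inner ℝ et t : ℝ) = Et'
        ∧ Dt ^ 2 - Et ^ 2 = ηt ^ 2 - ξt ^ 2
        ∧ Dt * Et * (inner ℝ dt et : ℝ) = ηt * ξt := by
  obtain ⟨b, b', hb, hbb', hbmul⟩ :=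
    exists_sq_sub_sq_eq_and_mul_eq (ηt ^ 2 - ξt ^ 2 - Nt ^ 2 + Et' ^ 2) (ηt * ξt - Nt * Et')
  have hD : Dt = √(Nt ^ 2 + b ^ 2) := by
    rw [hDt, hb]
    ring_nf
  have hE : Et = √(Et' ^ 2 + b' ^ 2) := by
    rw [hEt, hD, sq_sqrt (by positivity)]
    congr 1
    linarith
  have hDnn : 0 ≤ Dt := hD ▸ sqrt_nonneg _
  have hEnn : 0 ≤ Et := hE ▸ sqrt_nonneg _
  have hDE : 0 < Dt * Et := by
    have hCS : (Nt * Et' + b * b') ^ 2 ≤ (Dt * Et) ^ 2 := by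
      rw [mul_pow Dt, hD, hE, sq_sqrt (by positivity), sq_sqrt (by positivity)]
      nlinarith [sq_nonneg (Nt * b' - b * Et')]
    rw [pow_le_pow_iff_left₀ (by linarith [mul_pos hηt hξt]) (mul_nonneg hDnn hEnn)
      two_ne_zero] at hCS
    linarith [mul_pos hηt hξt]
  have hDpos : 0 < Dt := hDnn.lt_of_ne' (left_ne_zero_of_mul hDE.ne')
  have hEpos : 0 < Et := hEnn.lt_of_ne' (right_ne_zero_of_mul hDE.ne')
  obtain ⟨d, hd, hDd⟩ := exists_norm_eq_one_smul_eq_of_orthonormal ht hn htn hDpos.ne' hD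
  obtain ⟨e, he, hEe⟩ := exists_norm_eq_one_smul_eq_of_orthonormal ht hn htn hEpos.ne' hE
  refine ⟨hDpos, hEpos, d, e, hd, he, ?_, ?_, ?_, ?_⟩
  · rw [← real_inner_smul_left, hDd, inner_smul_add_smul_left_of_orthonormal ht hn htn]
  · rw [← real_inner_smul_left, hEe, inner_smul_add_smul_left_of_orthonormal ht hn htn]
  · rw [hD, hE, sq_sqrt (by positivity), sq_sqrt (by positivity)]
    linarith
  · rw [mul_assoc, ← real_inner_smul_right, ← real_inner_smul_left, hDd, hEe,
      inner_smul_add_smul_of_orthonormal ht hn htn]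
    linarith
end
end

section
/- Let t, n ∈ ℝ² be orthonormal vectors, let η̃ > 0 and Ñ ∈ ℝ with |Ñ| > η̃ (total internal reflection), and define D_t := max(η̃, |Ñ|) = |Ñ| and E_t := sqrt(Ñ² − η̃²). Set dᵗ := sign(Ñ)·t and eᵗ := n. Then E_t > 0; dᵗ and eᵗ are unit vectors; Snell's law holds with tangential data Ñ and Ẽ = 0, i.e., D_t·⟪dᵗ,t⟫ = Ñ and E_t·⟪eᵗ,t⟫ = 0; the transmitted Helmholtz constraints hold, i.e., D_t² − E_t² = η̃² and D_t·E_t·⟪dᵗ,eᵗ⟫ = 0; and both geometrical-optics sign conditions hold simultaneously: GO1 (⟪dᵗ,n⟫ ≥ 0) and GO2 (⟪eᵗ,n⟫ ≥ 0). -/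
/-!
In total internal reflection the transmitted phase direction `dᵗ = sign(Ñ) t` is tangential and the
decay direction `eᵗ = n` is normal, so `⟪dᵗ, n⟫ = 0` and `⟪eᵗ, n⟫ = 1`: GO1 and GO2 both hold.
The decay rate `E_t = √(Ñ² - η̃²)` is positive exactly because `η̃ < |Ñ|`.
-/

noncomputable section

namespace Real

theorem sign_mul_abs (x : ℝ) : sign x * |x| = x := by
  rcases lt_trichotomy x 0 with hx | rfl | hx
  · rw [sign_of_neg hx, abs_of_neg hx]; ring
  · rw [abs_zero, mul_zero]
  · rw [sign_of_pos hx, abs_of_pos hx, one_mul]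

theorem abs_sign_of_ne_zero {x : ℝ} (hx : x ≠ 0) : |sign x| = 1 := by
  rcases sign_apply_eq_of_ne_zero x hx with h | h <;> simp [h]

end Real

theorem sq_sub_sq_pos_of_lt_abs {a b : ℝ} (ha : 0 ≤ a) (h : a < |b|) : 0 < b ^ 2 - a ^ 2 :=
  sub_pos.2 (sq_lt_sq.2 (by rwa [abs_of_nonneg ha]))

section InnerProductSpace

variable {E : Type*} [NormedAddCommGroup E] [InnerProductSpace ℝ E]

theorem norm_sign_smul_of_ne_zero {x : ℝ} (hx : x ≠ 0) (v : E) : ‖Real.sign x • v‖ = ‖v‖ := by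
  rw [norm_smul, Real.norm_eq_abs, Real.abs_sign_of_ne_zero hx, one_mul]

theorem abs_mul_inner_sign_smul_self (x : ℝ) {t : E} (ht : ‖t‖ = 1) :
    |x| * inner ℝ (Real.sign x • t) t = x := by
  rw [real_inner_smul_left, real_inner_self_eq_norm_sq, ht, one_pow, mul_one, mul_comm,
    Real.sign_mul_abs]

end InnerProductSpace

theorem total_internal_reflection_GO1_GO2_compatible
    (t n : V) (ht : ‖t‖ = 1) (hn : ‖n‖ = 1) (htn : (inner ℝ t n : ℝ) = 0)
    (ηt Nt : ℝ) (hηt : 0 < ηt) (hTIR : ηt < |Nt|)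
    (Dt : ℝ) (hDt : Dt = max ηt |Nt|)
    (Et : ℝ) (hEt : Et = Real.sqrt (Nt ^ 2 - ηt ^ 2))
    (dt : V) (hdt : dt = Real.sign Nt • t)
    (et : V) (het : et = n) :
    Dt = |Nt|
      ∧ 0 < Et
      ∧ ‖dt‖ = 1 ∧ ‖et‖ = 1
      ∧ Dt * (inner ℝ dt t : ℝ) = Nt
      ∧ Et * (inner ℝ et t : ℝ) = 0
      ∧ Dt ^ 2 - Et ^ 2 = ηt ^ 2
      ∧ Dt * Et * (inner ℝ dt et : ℝ) = 0
      ∧ (0 : ℝ) ≤ (inner ℝ dt n : ℝ) ∧ (0 : ℝ) ≤ (inner ℝ et n : ℝ) := by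
  subst Dt Et dt et
  have hNt : Nt ≠ 0 := abs_pos.1 (hηt.trans hTIR)
  have hgap : 0 < Nt ^ 2 - ηt ^ 2 := sq_sub_sq_pos_of_lt_abs hηt.le hTIR
  have hdt_n : inner ℝ (Real.sign Nt • t) n = (0 : ℝ) := by
    rw [real_inner_smul_left, htn, mul_zero]
  rw [max_eq_right hTIR.le]
  refine ⟨rfl, Real.sqrt_pos.2 hgap, by rw [norm_sign_smul_of_ne_zero hNt, ht], hn,
    abs_mul_inner_sign_smul_self Nt ht, ?_, ?_, ?_, hdt_n.ge, real_inner_self_nonneg⟩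
  · rw [real_inner_comm, htn, mul_zero]
  · rw [sq_abs, Real.sq_sqrt hgap.le]; ring
  · rw [hdt_n, mul_zero]
end
end

section
/- Let t, n ∈ ℝ² be orthonormal vectors. Let dⁱ, eⁱ, dᵗ, eᵗ ∈ ℝ² be unit vectors and let D_i, E_i ∈ ℝ, D_t > 0, E_t > 0, η̃, ξ̃ ∈ ℝ with η̃·ξ̃ ≥ 0. Assume Snell's law: D_t·⟪dᵗ,t⟫ = D_i·⟪dⁱ,t⟫ and E_t·⟪eᵗ,t⟫ = E_i·⟪eⁱ,t⟫; assume the transmitted Helmholtz constraint D_t·E_t·⟪dᵗ,eᵗ⟫ = η̃·ξ̃; and assume the incident wave is homogeneous in the tangential direction, i.e., E_i·⟪eⁱ,t⟫ = 0. Then ⟪dᵗ,n⟫·⟪eᵗ,n⟫ ≥ 0, so the conditions GO1 (⟪dᵗ,n⟫ ≥ 0) and GO2 (⟪eᵗ,n⟫ ≥ 0) are compatible: there is a consistent choice of signs of the normal components for which both hold. -/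
/-!
Snell's law for the decay vector together with `E_i ⟪eⁱ,t⟫ = 0` forces `⟪eᵗ,t⟫ = 0`. In the
orthonormal frame `(t, n)` of the plane, `⟪dᵗ,eᵗ⟫ = ⟪dᵗ,t⟫⟪eᵗ,t⟫ + ⟪dᵗ,n⟫⟪eᵗ,n⟫` then collapses
to `⟪dᵗ,n⟫⟪eᵗ,n⟫`, whose sign is that of `η̃ ξ̃ ≥ 0` by the Helmholtz constraint.
-/

noncomputable section

open Module

theorem Orthonormal.sum_inner_mul_inner_of_card_eq_finrank {𝕜 E ι : Type*} [RCLike 𝕜]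
    [NormedAddCommGroup E] [InnerProductSpace 𝕜 E] [FiniteDimensional 𝕜 E] [Fintype ι]
    {v : ι → E} (hv : Orthonormal 𝕜 v) (hcard : Fintype.card ι = finrank 𝕜 E) (x y : E) :
    ∑ i, inner 𝕜 x (v i) * inner 𝕜 (v i) y = inner 𝕜 x y := by
  have hspan := hv.linearIndependent.span_eq_top_of_card_eq_finrank' hcard
  simpa using (OrthonormalBasis.mk hv hspan.ge).sum_inner_mul_inner x y

theorem real_inner_eq_of_orthonormal_pair {E : Type*} [NormedAddCommGroup E]
    [InnerProductSpace ℝ E] (hE : finrank ℝ E = 2) {t n : E} (htn : Orthonormal ℝ ![t, n])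
    (x y : E) :
    inner ℝ x y = inner ℝ x t * inner ℝ y t + inner ℝ x n * inner ℝ y n := by
  have : FiniteDimensional ℝ E := .of_finrank_eq_succ hE
  rw [← htn.sum_inner_mul_inner_of_card_eq_finrank (by simp [hE]) x y, Fin.sum_univ_two]
  simp [real_inner_comm]

theorem GO1_GO2_compatible_of_tangentially_homogeneous_general
    (t n : V) (ht : ‖t‖ = 1) (hn : ‖n‖ = 1) (htn : (inner ℝ t n : ℝ) = 0)
    (ei dt et : V)
    (Ei : ℝ) (Dt Et ηt ξt : ℝ) (hDt : 0 < Dt) (hEt : 0 < Et)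
    (hηξ : 0 ≤ ηt * ξt)
    (hSnellE : Et * (inner ℝ et t : ℝ) = Ei * (inner ℝ ei t : ℝ))
    (hHelm : Dt * Et * (inner ℝ dt et : ℝ) = ηt * ξt)
    (hhom : Ei * (inner ℝ ei t : ℝ) = 0) :
    (0 : ℝ) ≤ (inner ℝ dt n : ℝ) * (inner ℝ et n : ℝ)
      ∧ (((0 : ℝ) ≤ (inner ℝ dt n : ℝ) ∧ (0 : ℝ) ≤ (inner ℝ et n : ℝ))
          ∨ ((inner ℝ dt n : ℝ) ≤ 0 ∧ (inner ℝ et n : ℝ) ≤ 0)) := by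
  have het_tangent : inner ℝ et t = (0 : ℝ) :=
    (mul_eq_zero.1 (hSnellE.trans hhom)).resolve_left hEt.ne'
  have hdt_et : 0 ≤ inner ℝ dt et := nonneg_of_mul_nonneg_right (hHelm ▸ hηξ) (mul_pos hDt hEt)
  have hframe : Orthonormal ℝ ![t, n] := by simp [ht, hn, htn]
  have hnormal : 0 ≤ inner ℝ dt n * inner ℝ et n := by
    simpa [real_inner_eq_of_orthonormal_pair finrank_euclideanSpace_fin hframe dt et,
      het_tangent] using hdt_et
  exact ⟨hnormal, mul_nonneg_iff.1 hnormal⟩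

theorem GO1_GO2_compatible_of_tangentially_homogeneous
    (t n : V) (ht : ‖t‖ = 1) (hn : ‖n‖ = 1) (htn : (inner ℝ t n : ℝ) = 0)
    (di ei dt et : V)
    (hdi : ‖di‖ = 1) (hei : ‖ei‖ = 1) (hdt : ‖dt‖ = 1) (het : ‖et‖ = 1)
    (Di Ei : ℝ) (Dt Et ηt ξt : ℝ) (hDt : 0 < Dt) (hEt : 0 < Et)
    (hηξ : 0 ≤ ηt * ξt)
    (hSnellD : Dt * (inner ℝ dt t : ℝ) = Di * (inner ℝ di t : ℝ))
    (hSnellE : Et * (inner ℝ et t : ℝ) = Ei * (inner ℝ ei t : ℝ))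
    (hHelm : Dt * Et * (inner ℝ dt et : ℝ) = ηt * ξt)
    (hhom : Ei * (inner ℝ ei t : ℝ) = 0) :
    (0 : ℝ) ≤ (inner ℝ dt n : ℝ) * (inner ℝ et n : ℝ)
      ∧ (((0 : ℝ) ≤ (inner ℝ dt n : ℝ) ∧ (0 : ℝ) ≤ (inner ℝ et n : ℝ))
          ∨ ((inner ℝ dt n : ℝ) ≤ 0 ∧ (inner ℝ et n : ℝ) ≤ 0)) :=
  GO1_GO2_compatible_of_tangentially_homogeneous_general t n ht hn htn ei dt et Ei Dt Et ηt ξt hDt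
    hEt hηξ hSnellE hHelm hhom
end
end
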